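/- Let E be a nonzero real Banach space and f : E → (−∞,∞] be proper, convex and lower semicontinuous. Then the subdifferential ∂f : E ⇉ E* is closed, monotone and quasidense. -/

import Mathlib

open NormedSpace Filter

/-- A set `A ⊆ X × X*` (the graph of a multifunction `X ⇉ X*`) is monotone:
`⟨p − q, p* − q*⟩ ≥ 0` for all `(p,p*), (q,q*)` in `A`. -/
def IsMonotoneGraph {X : Type*} [NormedAddCommGroup X] [NormedSpace ℝ X]
    (A : Set (X × StrongDual ℝ X)) : Prop :=
  ∀ p ∈ A, ∀ q ∈ A, 0 ≤ (p.2 - q.2) (p.1 - q.1)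

/-- `A` is maximally monotone: monotone and not properly contained in a monotone graph. -/
def IsMaxMonotoneGraph {X : Type*} [NormedAddCommGroup X] [NormedSpace ℝ X]
    (A : Set (X × StrongDual ℝ X)) : Prop :=
  IsMonotoneGraph A ∧ ∀ B : Set (X × StrongDual ℝ X), IsMonotoneGraph B → A ⊆ B → B = A

/-- `A` is quasidense: for every `(x,x*)`,
`inf_{(s,s*)∈A} [½‖s−x‖² + ½‖s*−x*‖² + ⟨s−x,s*−x*⟩] ≤ 0`. -/
def IsQuasidense {X : Type*} [NormedAddCommGroup X] [NormedSpace ℝ X]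
    (A : Set (X × StrongDual ℝ X)) : Prop :=
  ∀ (x : X) (x' : StrongDual ℝ X) (ε : ℝ), 0 < ε → ∃ p ∈ A,
    2⁻¹ * ‖p.1 - x‖ ^ 2 + 2⁻¹ * ‖p.2 - x'‖ ^ 2 + (p.2 - x') (p.1 - x) < ε

/-- The Fitzpatrick function of the graph `A`:
`φ_A(x,x*) = sup_{(s,s*)∈A} [⟨s,x*⟩ + ⟨x,s*⟩ − ⟨s,s*⟩]`, valued in `(−∞,∞]` (here `EReal`). -/
noncomputable def fitzFn {X : Type*} [NormedAddCommGroup X] [NormedSpace ℝ X]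
    (A : Set (X × StrongDual ℝ X)) (p : X × StrongDual ℝ X) : EReal :=
  ⨆ q : A, ((p.2 q.1.1 + q.1.2 p.1 - q.1.2 q.1.1 : ℝ) : EReal)

/-- Fenchel conjugate of a function on `X × X*`, as a function on `X* × X**`, with respect
to the pairing `⟨(x,x*),(y*,y**)⟩ = ⟨x,y*⟩ + ⟨x*,y**⟩`. -/
noncomputable def pairConj {X : Type*} [NormedAddCommGroup X] [NormedSpace ℝ X]
    (f : X × StrongDual ℝ X → EReal) (q : StrongDual ℝ X × StrongDual ℝ (StrongDual ℝ X)) : EReal :=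
  ⨆ p : X × StrongDual ℝ X, (((q.1 p.1 + q.2 p.2 : ℝ) : EReal) - f p)

/-- Graph of the Fitzpatrick extension `S^𝔽 : X* ⇉ X**` of a multifunction with graph `A`:
`(y*,y**) ∈ G(S^𝔽)` iff `φ_A*(y*,y**) = ⟨y*,y**⟩`. -/
noncomputable def fitzExtGraph {X : Type*} [NormedAddCommGroup X] [NormedSpace ℝ X]
    (A : Set (X × StrongDual ℝ X)) : Set (StrongDual ℝ X × StrongDual ℝ (StrongDual ℝ X)) :=
  {q | pairConj (fitzFn A) q = ((q.2 q.1 : ℝ) : EReal)}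

/-- Fenchel conjugate of `f : X → (−∞,∞]`: `f*(x*) = sup_x [⟨x,x*⟩ − f(x)]`. -/
noncomputable def fnConj {X : Type*} [NormedAddCommGroup X] [NormedSpace ℝ X]
    (f : X → EReal) (x' : StrongDual ℝ X) : EReal :=
  ⨆ x : X, (((x' x : ℝ) : EReal) - f x)

/-- Graph of the subdifferential of `f`: `x* ∈ ∂f(x)` iff `f(x) + f*(x*) = ⟨x,x*⟩`. -/
noncomputable def subdiffGraph {X : Type*} [NormedAddCommGroup X] [NormedSpace ℝ X]
    (f : X → EReal) : Set (X × StrongDual ℝ X) :=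
  {p | f p.1 + fnConj f p.2 = ((p.2 p.1 : ℝ) : EReal)}

/-- Convexity for `(−∞,∞]`-valued functions. -/
def ERealConvexOn {X : Type*} [AddCommGroup X] [Module ℝ X] (f : X → EReal) : Prop :=
  ∀ x y : X, ∀ a b : ℝ, 0 ≤ a → 0 ≤ b → a + b = 1 →
    f (a • x + b • y) ≤ (a : EReal) * f x + (b : EReal) * f y

/-- `f` is proper: never `−∞` and somewhere finite. -/
def ERealProper {X : Type*} (f : X → EReal) : Prop :=
  (∀ x, f x ≠ ⊥) ∧ (∃ x, f x ≠ ⊤)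

/-- Domain of a multifunction given by its graph. -/
def graphDomain {X Y : Type*} (A : Set (X × Y)) : Set X := {x | ∃ y, (x, y) ∈ A}

/-- Range of a multifunction given by its graph. -/
def graphRange {X Y : Type*} (A : Set (X × Y)) : Set Y := {y | ∃ x, (x, y) ∈ A}

/-- Graph of the sum of two multifunctions: `(S+T)(x) = S(x) + T(x)`. -/
def sumGraph {X Y : Type*} [Add Y] (A B : Set (X × Y)) : Set (X × Y) :=
  {p | ∃ u v, (p.1, u) ∈ A ∧ (p.1, v) ∈ B ∧ p.2 = u + v}

/-!
By the Fenchel–Young inequality `⟨x, x*⟩ ≤ f x + f* x*`, the graph of `∂f` is the set where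
`f x + f* x* ≤ ⟨x, x*⟩`: a sublevel set of a lower semicontinuous function, hence closed, and
adding two subgradient inequalities gives monotonicity.

For quasidensity at `(x, x*)`, the function `g = f + ½‖· - x‖² - x*` is bounded below and
coercive because `f` has a continuous affine minorant. Ekeland's principle gives a point `s` in
a fixed sublevel set of `g` at which `g + α‖· - s‖` is minimal, and the sum rule (a Hahn–Banach
sandwich) yields `t ∈ ∂f(s)` such that `x* - t` is an `α`-approximate subgradient of `½‖·‖²`
at `s - x`. This forces `½‖s - x‖² + ½‖t - x*‖² + ⟨s - x, t - x*⟩ ≤ 2α‖s - x‖ + α²/2`, which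
is small since `s` stays in a bounded set independent of `α`.
-/

theorem LowerSemicontinuous.add_coe {X : Type*} [TopologicalSpace X] {φ : X → EReal}
    {k : X → ℝ} (hφ : LowerSemicontinuous φ) (hk : Continuous k) :
    LowerSemicontinuous fun y => φ y + (k y : EReal) :=
  hφ.add' (continuous_coe_real_ereal.comp hk).lowerSemicontinuous fun _ =>
    EReal.continuousAt_add (.inr (EReal.coe_ne_bot _)) (.inr (EReal.coe_ne_top _))

theorem EReal.le_of_forall_le_add_of_tendsto {a b : EReal} {δ : ℕ → ℝ}
    (hδ : Tendsto δ atTop (nhds 0)) (h : ∀ n, a ≤ b + δ n) : a ≤ b := by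
  have hlim := (EReal.continuousAt_add (p := (b, 0)) (.inr EReal.zero_ne_bot)
    (.inr EReal.zero_ne_top)).tendsto.comp
      (tendsto_const_nhds.prodMk_nhds (EReal.tendsto_coe.2 hδ))
  rw [add_zero] at hlim
  exact ge_of_tendsto' hlim h

theorem ERealConvexOn.convex_epigraph {E : Type*} [AddCommGroup E] [Module ℝ E] {f : E → EReal}
    (hf : ERealConvexOn f) : Convex ℝ {p : E × ℝ | f p.1 ≤ p.2} := by
  rintro ⟨y₁, τ₁⟩ h₁ ⟨y₂, τ₂⟩ h₂ a b ha hb hab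
  calc f (a • y₁ + b • y₂) ≤ (a : EReal) * f y₁ + (b : EReal) * f y₂ := hf y₁ y₂ a b ha hb hab
    _ ≤ (a : EReal) * τ₁ + (b : EReal) * τ₂ := by
      gcongr
      exacts [h₁, h₂]
    _ = ((a • (y₁, τ₁) + b • (y₂, τ₂)).2 : ℝ) := by simp

section ConvexAnalysis

variable {E : Type*} [NormedAddCommGroup E] [NormedSpace ℝ E] {f : E → EReal}

theorem ContinuousLinearMap.apply_prod_real (ℓ : E × ℝ →L[ℝ] ℝ) (y : E) (τ : ℝ) :
    ℓ (y, τ) = ℓ (y, 0) + τ * ℓ (0, 1) := by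
  rw [← smul_eq_mul, ← map_smul, ← map_add, Prod.smul_mk, smul_zero, smul_eq_mul, mul_one,
    Prod.mk_add_mk, add_zero, zero_add]

/-- `t + c` is the affine function whose graph is the hyperplane `ℓ = u`. -/
theorem exists_affine_of_separates_epigraph (ℓ : E × ℝ →L[ℝ] ℝ) {u : ℝ}
    (hℓ : 0 < ℓ (0, 1)) (hsep : ∀ y (τ : ℝ), f y ≤ τ → u ≤ ℓ (y, τ)) :
    ∃ (t : StrongDual ℝ E) (c : ℝ), (∀ y, ((t y + c : ℝ) : EReal) ≤ f y) ∧
      ∀ y τ, ℓ (y, τ) < u → τ < t y + c := by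
  obtain ⟨t, c, key⟩ : ∃ (t : StrongDual ℝ E) (c : ℝ),
      ∀ y τ, ℓ (y, τ) - u = ℓ (0, 1) * (τ - (t y + c)) := by
    refine ⟨-(ℓ (0, 1))⁻¹ • ℓ.comp (.inl ℝ E ℝ), u / ℓ (0, 1), fun y τ => ?_⟩
    simp only [_root_.smul_apply, ContinuousLinearMap.comp_apply,
      ContinuousLinearMap.inl_apply, smul_eq_mul, ℓ.apply_prod_real y τ]
    field_simp
    ring
  refine ⟨t, c, fun y => EReal.le_of_forall_lt_iff_le.1 fun τ hτ => ?_, fun y τ hτ => ?_⟩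
  · have := key y τ
    have := hsep y τ hτ.le
    exact_mod_cast (by nlinarith : t y + c ≤ τ)
  · have := key y τ
    nlinarith

theorem exists_affine_minorant (hf : ERealProper f) (hconv : ERealConvexOn f)
    (hlsc : LowerSemicontinuous f) :
    ∃ (t : StrongDual ℝ E) (c : ℝ), ∀ y, ((t y + c : ℝ) : EReal) ≤ f y := by
  obtain ⟨x₀, hx₀⟩ := hf.2
  lift f x₀ to ℝ using ⟨hx₀, hf.1 x₀⟩ with v₀ hv₀
  have hclosed : IsClosed {p : E × ℝ | f p.1 ≤ p.2} :=
    hlsc.isClosed_epigraph.preimage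
      (continuous_fst.prodMk (continuous_coe_real_ereal.comp continuous_snd))
  have hnot : (x₀, v₀ - 1) ∉ {p : E × ℝ | f p.1 ≤ p.2} := by
    simp only [Set.mem_ofPred_eq, ← hv₀, EReal.coe_le_coe_iff]
    linarith
  obtain ⟨ℓ, u, hbelow, habove⟩ :=
    geometric_hahn_banach_point_closed hconv.convex_epigraph hclosed hnot
  have hβ : 0 < ℓ (0, 1) := by
    have := habove (x₀, v₀) (by simp [← hv₀])
    have := ℓ.apply_prod_real x₀ v₀
    have := ℓ.apply_prod_real x₀ (v₀ - 1)
    nlinarith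
  obtain ⟨t, c, ht, -⟩ :=
    exists_affine_of_separates_epigraph ℓ hβ fun y τ h => (habove (y, τ) h).le
  exact ⟨t, c, ht⟩

/-- Hahn–Banach sandwich theorem. -/
theorem exists_affine_between (hconv : ERealConvexOn f) {g : E → ℝ}
    (hg : ConcaveOn ℝ Set.univ g) (hgc : Continuous g) (hgf : ∀ y, (g y : EReal) ≤ f y)
    (hdom : ∃ y, f y ≠ ⊤) :
    ∃ (t : StrongDual ℝ E) (c : ℝ), ∀ y, g y ≤ t y + c ∧ ((t y + c : ℝ) : EReal) ≤ f y := by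
  obtain ⟨y₀, hy₀⟩ := hdom
  lift f y₀ to ℝ using ⟨hy₀, ne_bot_of_le_ne_bot (EReal.coe_ne_bot _) (hgf y₀)⟩ with v₀ hv₀
  have hopen : IsOpen {p : E × ℝ | p.2 < g p.1} :=
    isOpen_lt continuous_snd (hgc.comp continuous_fst)
  have hconvex : Convex ℝ {p : E × ℝ | p.2 < g p.1} := by
    simpa only [Set.mem_univ, true_and] using hg.convex_strict_hypograph
  have hdisj : Disjoint {p : E × ℝ | p.2 < g p.1} {p : E × ℝ | f p.1 ≤ p.2} :=
    Set.disjoint_left.2 fun p hlt hle =>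
      (hgf p.1).not_gt (lt_of_le_of_lt hle (EReal.coe_lt_coe_iff.2 hlt))
  obtain ⟨ℓ, u, hbelow, habove⟩ :=
    geometric_hahn_banach_open hconvex hopen hconv.convex_epigraph hdisj
  have hβ : 0 < ℓ (0, 1) := by
    have := habove (y₀, v₀) (by simp [← hv₀])
    have := hbelow (y₀, g y₀ - 1) (by simp)
    have := ℓ.apply_prod_real y₀ v₀
    have := ℓ.apply_prod_real y₀ (g y₀ - 1)
    have : g y₀ ≤ v₀ := by exact_mod_cast hv₀ ▸ hgf y₀
    nlinarith
  obtain ⟨t, c, ht, hlt⟩ :=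
    exists_affine_of_separates_epigraph ℓ hβ fun y τ h => habove (y, τ) h
  exact ⟨t, c, fun y => ⟨le_of_forall_lt fun τ hτ => hlt y τ (hbelow (y, τ) hτ), ht y⟩⟩

/-- Sum rule at a minimiser `s` of `f + k`: `t ∈ ∂f(s)` and `-t ∈ ∂k(s)`. -/
theorem exists_subgradient_of_forall_le_add (hconv : ERealConvexOn f) {k : E → ℝ}
    (hk : ConvexOn ℝ Set.univ k) (hkc : Continuous k) {s : E} {a : ℝ} (hfs : f s = a)
    (hmin : ∀ y, ((a + k s : ℝ) : EReal) ≤ f y + (k y : EReal)) :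
    ∃ t : StrongDual ℝ E, (∀ y, ((a + t (y - s) : ℝ) : EReal) ≤ f y) ∧
      ∀ y, k s - t (y - s) ≤ k y := by
  have hgf : ∀ y, ((a + k s - k y : ℝ) : EReal) ≤ f y := fun y => by
    rw [EReal.coe_sub, EReal.sub_le_iff_le_add (.inl (EReal.coe_ne_bot _))
      (.inl (EReal.coe_ne_top _))]
    exact hmin y
  obtain ⟨t, c, htc⟩ := exists_affine_between (g := fun y => a + k s - k y) hconv
    ((concaveOn_const (a + k s) convex_univ).sub hk) (continuous_const.sub hkc) hgf
    ⟨s, by simp [hfs]⟩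
  have hts : t s + c = a := by
    have h₁ := (htc s).1
    have h₂ := (htc s).2
    rw [hfs, EReal.coe_le_coe_iff] at h₂
    linarith
  refine ⟨t, fun y => ?_, fun y => ?_⟩
  · calc ((a + t (y - s) : ℝ) : EReal) = ((t y + c : ℝ) : EReal) := by
          rw [map_sub, ← hts]; ring_nf
      _ ≤ f y := (htc y).2
  · have := (htc y).1
    rw [map_sub]
    linarith

end ConvexAnalysis

section Subdifferential

variable {E : Type*} [NormedAddCommGroup E] [NormedSpace ℝ E] {f : E → EReal}

theorem fnConj_le_coe_iff (x' : StrongDual ℝ E) (b : ℝ) :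
    fnConj f x' ≤ b ↔ ∀ y, ((x' y - b : ℝ) : EReal) ≤ f y := by
  refine iSup_le_iff.trans (forall_congr' fun y => ?_)
  rw [EReal.sub_le_iff_le_add (.inr (EReal.coe_ne_top _)) (.inr (EReal.coe_ne_bot _)),
    EReal.coe_sub, EReal.sub_le_iff_le_add (.inl (EReal.coe_ne_bot _)) (.inl (EReal.coe_ne_top _)),
    add_comm]

theorem ERealProper.fnConj_ne_bot (hf : ERealProper f) (x' : StrongDual ℝ E) :
    fnConj f x' ≠ ⊥ := by
  obtain ⟨x₀, hx₀⟩ := hf.2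
  lift f x₀ to ℝ using ⟨hx₀, hf.1 x₀⟩ with v₀ hv₀
  refine ne_bot_of_le_ne_bot (EReal.coe_ne_bot (x' x₀ - v₀)) ?_
  rw [EReal.coe_sub, hv₀]
  exact le_iSup (fun x => ((x' x : ℝ) : EReal) - f x) x₀

/-- Fenchel–Young inequality. -/
theorem ERealProper.coe_apply_le_add_fnConj (hf : ERealProper f) (x : E)
    (x' : StrongDual ℝ E) : ((x' x : ℝ) : EReal) ≤ f x + fnConj f x' := by
  rw [add_comm, ← EReal.sub_le_iff_le_add (.inl (hf.1 x)) (.inr (hf.fnConj_ne_bot x'))]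
  exact le_iSup (fun y => ((x' y : ℝ) : EReal) - f y) x

theorem ERealProper.mem_subdiffGraph_iff_le (hf : ERealProper f) (p : E × StrongDual ℝ E) :
    p ∈ subdiffGraph f ↔ f p.1 + fnConj f p.2 ≤ p.2 p.1 :=
  ⟨le_of_eq, fun h => le_antisymm h (hf.coe_apply_le_add_fnConj p.1 p.2)⟩

theorem ERealProper.mem_subdiffGraph_iff (hf : ERealProper f) (p : E × StrongDual ℝ E) :
    p ∈ subdiffGraph f ↔
      ∃ r : ℝ, f p.1 = r ∧ ∀ y, ((r + p.2 (y - p.1) : ℝ) : EReal) ≤ f y := by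
  have hrearrange : ∀ r y, p.2 y - (p.2 p.1 - r) = r + p.2 (y - p.1) := fun r y => by
    rw [map_sub]; ring
  rw [hf.mem_subdiffGraph_iff_le]
  constructor
  · intro h
    have htop : f p.1 ≠ ⊤ := fun htop => by
      rw [htop, EReal.top_add_of_ne_bot (hf.fnConj_ne_bot _)] at h
      exact EReal.coe_ne_top _ (top_le_iff.1 h)
    lift f p.1 to ℝ using ⟨htop, hf.1 _⟩ with r hr
    refine ⟨r, rfl, fun y => ?_⟩
    rw [add_comm, ← EReal.le_sub_iff_add_le (.inl (EReal.coe_ne_bot _))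
      (.inl (EReal.coe_ne_top _)), ← EReal.coe_sub, fnConj_le_coe_iff] at h
    simpa only [hrearrange] using h y
  · rintro ⟨r, hr, hy⟩
    rw [hr, add_comm, ← EReal.le_sub_iff_add_le (.inl (EReal.coe_ne_bot _))
      (.inl (EReal.coe_ne_top _)), ← EReal.coe_sub, fnConj_le_coe_iff]
    simpa only [hrearrange] using hy

theorem ERealProper.isClosed_subdiffGraph (hf : ERealProper f) (hlsc : LowerSemicontinuous f) :
    IsClosed (subdiffGraph f) := by
  have hconj : LowerSemicontinuous (fnConj f) := lowerSemicontinuous_iSup fun x => by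
    simp only [sub_eq_add_neg]
    exact LowerSemicontinuous.add' (f := fun x' : StrongDual ℝ E => ((x' x : ℝ) : EReal))
      (continuous_coe_real_ereal.comp (ContinuousLinearMap.apply ℝ ℝ x).continuous
        ).lowerSemicontinuous lowerSemicontinuous_const fun _ =>
          EReal.continuousAt_add (.inl (EReal.coe_ne_top _)) (.inl (EReal.coe_ne_bot _))
  have hsum : LowerSemicontinuous fun p : E × StrongDual ℝ E => f p.1 + fnConj f p.2 :=
    (hlsc.comp continuous_fst).add' (hconj.comp continuous_snd) fun p =>
      EReal.continuousAt_add (.inr (hf.fnConj_ne_bot p.2)) (.inl (hf.1 p.1))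
  have hpair : Continuous fun p : E × StrongDual ℝ E => p.2 p.1 :=
    isBoundedBilinearMap_apply.continuous.comp continuous_swap
  convert hsum.isClosed_epigraph.preimage
    (continuous_id.prodMk (continuous_coe_real_ereal.comp hpair)) using 1
  exact Set.ext hf.mem_subdiffGraph_iff_le

theorem ERealProper.isMonotoneGraph_subdiffGraph (hf : ERealProper f) :
    IsMonotoneGraph (subdiffGraph f) := by
  intro p hp q hq
  obtain ⟨r, hr, hp⟩ := (hf.mem_subdiffGraph_iff p).1 hp
  obtain ⟨r', hr', hq⟩ := (hf.mem_subdiffGraph_iff q).1 hq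
  have h₁ := hp q.1
  have h₂ := hq p.1
  rw [hr', EReal.coe_le_coe_iff] at h₁
  rw [hr, EReal.coe_le_coe_iff] at h₂
  simp only [_root_.sub_apply, map_sub] at h₁ h₂ ⊢
  linarith

end Subdifferential

section Ekeland

variable {X : Type*} [PseudoMetricSpace X] {φ : X → EReal} {ε : ℝ}

def ekelandSet (φ : X → EReal) (ε : ℝ) (s : X) : Set X :=
  {y | φ y + ((ε * dist y s : ℝ) : EReal) ≤ φ s}

theorem self_mem_ekelandSet (s : X) : s ∈ ekelandSet φ ε s := by
  simp [ekelandSet]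

theorem le_of_mem_ekelandSet (hε : 0 ≤ ε) {y s : X} (h : y ∈ ekelandSet φ ε s) : φ y ≤ φ s :=
  (le_add_of_nonneg_right (EReal.coe_nonneg.2 (by positivity))).trans h

theorem ekelandSet_subset (hε : 0 ≤ ε) {y s : X} (h : y ∈ ekelandSet φ ε s) :
    ekelandSet φ ε y ⊆ ekelandSet φ ε s := by
  intro z hz
  calc φ z + ((ε * dist z s : ℝ) : EReal)
      ≤ φ z + ((ε * dist z y : ℝ) : EReal) + ((ε * dist y s : ℝ) : EReal) := by
        rw [add_assoc, ← EReal.coe_add, ← mul_add]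
        gcongr
        exact dist_triangle z y s
    _ ≤ φ y + ((ε * dist y s : ℝ) : EReal) := by gcongr; exact hz
    _ ≤ φ s := h

theorem LowerSemicontinuous.isClosed_ekelandSet (hφ : LowerSemicontinuous φ) (s : X) :
    IsClosed (ekelandSet φ ε s) :=
  (hφ.add_coe (continuous_const.mul (continuous_id.dist continuous_const))).isClosed_preimage (φ s)

theorem exists_mem_ekelandSet_forall_le_add {m : ℝ} (hm : ∀ y, (m : EReal) ≤ φ y) {s : X}
    (hs : φ s ≠ ⊤) {δ : ℝ} (hδ : 0 < δ) :
    ∃ s' ∈ ekelandSet φ ε s, ∀ y ∈ ekelandSet φ ε s, φ s' ≤ φ y + δ := by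
  set I := sInf (φ '' ekelandSet φ ε s)
  have hIs : I ≤ φ s := sInf_le ⟨s, self_mem_ekelandSet s, rfl⟩
  have hmI : (m : EReal) ≤ I := le_sInf (by rintro _ ⟨y, -, rfl⟩; exact hm y)
  obtain ⟨r, hr⟩ : ∃ r : ℝ, I = r :=
    ⟨I.toReal, (EReal.coe_toReal (ne_top_of_le_ne_top hs hIs)
      (ne_bot_of_le_ne_bot (EReal.coe_ne_bot m) hmI)).symm⟩
  have hlt : I < I + δ := by
    rw [hr, ← EReal.coe_add, EReal.coe_lt_coe_iff]
    linarith
  obtain ⟨_, ⟨s', hs', rfl⟩, hs'lt⟩ := sInf_lt_iff.1 hlt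
  exact ⟨s', hs', fun y hy =>
    hs'lt.le.trans (add_le_add_left (sInf_le (Set.mem_image_of_mem φ hy)) _)⟩

theorem mul_dist_le_of_mem_ekelandSet {m : ℝ} (hm : ∀ y, (m : EReal) ≤ φ y) (hε : 0 ≤ ε)
    {s s' y : X} (hs : φ s ≠ ⊤) (hs' : s' ∈ ekelandSet φ ε s) {δ : ℝ}
    (hnear : ∀ y ∈ ekelandSet φ ε s, φ s' ≤ φ y + δ) (hy : y ∈ ekelandSet φ ε s') :
    ε * dist y s' ≤ δ := by
  have hys := ekelandSet_subset hε hs' hy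
  lift φ y to ℝ using ⟨ne_top_of_le_ne_top hs (le_of_mem_ekelandSet hε hys),
    ne_bot_of_le_ne_bot (EReal.coe_ne_bot m) (hm y)⟩ with v hv
  have := (hy : φ y + _ ≤ φ s').trans (hnear y hys)
  rw [← hv, ← EReal.coe_add, ← EReal.coe_add, EReal.coe_le_coe_iff] at this
  linarith

/-- Ekeland's variational principle. -/
theorem LowerSemicontinuous.exists_le_forall_le_add_dist [CompleteSpace X]
    (hφ : LowerSemicontinuous φ) {m : ℝ} (hm : ∀ y, (m : EReal) ≤ φ y) {x₀ : X}
    (hx₀ : φ x₀ ≠ ⊤) (hε : 0 < ε) :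
    ∃ s, φ s ≤ φ x₀ ∧ ∀ y, φ s ≤ φ y + ((ε * dist y s : ℝ) : EReal) := by
  set δ : ℕ → ℝ := fun n => ε * (1 / ((n : ℝ) + 1))
  choose next hnext_mem hnext using fun (n : ℕ) (s : {s : X // φ s ≠ ⊤}) =>
    exists_mem_ekelandSet_forall_le_add (ε := ε) hm s.2 (show 0 < δ n by positivity)
  let seq : ℕ → {s : X // φ s ≠ ⊤} := fun n => Nat.rec ⟨x₀, hx₀⟩ (fun k s =>
    ⟨next k s, ne_top_of_le_ne_top s.2 (le_of_mem_ekelandSet hε.le (hnext_mem k s))⟩) n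
  set S : ℕ → Set X := fun n => ekelandSet φ ε (seq n).1
  have hS : Antitone S :=
    antitone_nat_of_succ_le fun n => ekelandSet_subset hε.le (hnext_mem n (seq n))
  have hseq_mem : ∀ n k, n ≤ k → (seq k).1 ∈ S n := fun n k h => hS h (self_mem_ekelandSet _)
  have hsmall : ∀ n, ∀ y ∈ S (n + 1), dist y (seq (n + 1)) ≤ 1 / ((n : ℝ) + 1) := fun n y hy =>
    le_of_mul_le_mul_left (mul_dist_le_of_mem_ekelandSet hm hε.le (seq n).2
      (hnext_mem n (seq n)) (hnext n (seq n)) hy) hε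
  have hcauchy : CauchySeq fun n => (seq n).1 := by
    refine Metric.cauchySeq_iff'.2 fun η hη => ?_
    obtain ⟨N, hN⟩ := exists_nat_one_div_lt hη
    exact ⟨N + 1, fun n hn => (hsmall N _ (hseq_mem _ _ hn)).trans_lt hN⟩
  obtain ⟨s, hlim⟩ := cauchySeq_tendsto_of_complete hcauchy
  have hsS : ∀ n, s ∈ S n := fun n => (hφ.isClosed_ekelandSet _).mem_of_tendsto hlim
    (eventually_atTop.2 ⟨n, fun k hk => hseq_mem n k hk⟩)
  refine ⟨s, le_of_mem_ekelandSet hε.le (hsS 0), fun y => le_of_not_gt fun hy => ?_⟩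
  have hnear : ∀ n, φ s ≤ φ y + δ n := fun n =>
    (le_of_mem_ekelandSet hε.le (hsS (n + 1))).trans
      (hnext n (seq n) y (ekelandSet_subset hε.le (hsS n) hy.le))
  have hδ : Tendsto δ atTop (nhds 0) := by
    simpa only [mul_zero] using tendsto_one_div_add_atTop_nhds_zero_nat.const_mul ε
  exact hy.not_ge ((EReal.le_of_forall_le_add_of_tendsto hδ hnear).trans
    (le_add_of_nonneg_right (EReal.coe_nonneg.2 (by positivity))))

end Ekeland

theorem le_of_forall_pos_le_add_mul {a b c : ℝ} (h : ∀ r > 0, a ≤ b + r * c) : a ≤ b := by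
  refine le_of_forall_pos_le_add fun δ hδ => (h (δ / (|c| + 1)) (by positivity)).trans ?_
  have : δ / (|c| + 1) * c ≤ δ / (|c| + 1) * (|c| + 1) :=
    mul_le_mul_of_nonneg_left ((le_abs_self c).trans (by linarith)) (by positivity)
  rw [div_mul_cancel₀ _ (by positivity)] at this
  linarith

section Quasidense

variable {E : Type*} [NormedAddCommGroup E] [NormedSpace ℝ E] {f : E → EReal}

/-- `w` is an `α`-approximate subgradient of `½‖·‖²` at `u`, so it nearly attains equality in
the Fenchel–Young inequality `w u ≤ ½‖u‖² + ½‖w‖²`. -/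
theorem half_sq_add_half_opNorm_sq_sub_le {u : E} {w : StrongDual ℝ E} {α : ℝ} (hα : 0 ≤ α)
    (h : ∀ v, 2⁻¹ * ‖u‖ ^ 2 + w v - α * ‖v‖ ≤ 2⁻¹ * ‖u + v‖ ^ 2) :
    2⁻¹ * ‖u‖ ^ 2 + 2⁻¹ * ‖w‖ ^ 2 - w u ≤ 2 * α * ‖u‖ + 2⁻¹ * α ^ 2 := by
  have hw_le : ∀ v, w v ≤ (‖u‖ + α) * ‖v‖ := fun v => le_of_forall_pos_le_add_mul fun r hr => by
    have h₁ := h (r • v)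
    have h₂ : ‖u + r • v‖ ≤ ‖u‖ + r * ‖v‖ :=
      (norm_add_le _ _).trans_eq (by rw [norm_smul, Real.norm_of_nonneg hr.le])
    rw [map_smul, smul_eq_mul, norm_smul, Real.norm_of_nonneg hr.le] at h₁
    have : r * w v ≤ r * ((‖u‖ + α) * ‖v‖ + r * (2⁻¹ * ‖v‖ ^ 2)) := by
      nlinarith [norm_nonneg (u + r • v), norm_nonneg u, norm_nonneg v]
    exact le_of_mul_le_mul_left this hr
  have hw : ‖w‖ ≤ ‖u‖ + α := w.opNorm_le_bound (by positivity) fun v => by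
    refine Real.norm_eq_abs _ ▸ abs_le.2 ⟨?_, hw_le v⟩
    have := hw_le (-v)
    rw [map_neg, norm_neg] at this
    linarith
  have hwu : ‖u‖ ^ 2 - α * ‖u‖ ≤ w u :=
      le_of_forall_pos_le_add_mul (c := 2⁻¹ * ‖u‖ ^ 2) fun τ hτ => by
    have h₁ := h (-τ • u)
    rw [show u + -τ • u = (1 - τ) • u by module, norm_smul, norm_smul, map_smul, smul_eq_mul,
      Real.norm_eq_abs, Real.norm_eq_abs, mul_pow, sq_abs, abs_neg, abs_of_pos hτ] at h₁
    have : τ * (‖u‖ ^ 2 - α * ‖u‖) ≤ τ * (w u + τ * (2⁻¹ * ‖u‖ ^ 2)) := by nlinarith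
    exact le_of_mul_le_mul_left this hτ
  nlinarith [mul_le_mul hw hw (norm_nonneg w) (by positivity)]

theorem exists_norm_sub_add_le_add_half_sq {z : StrongDual ℝ E} {c : ℝ}
    (hzc : ∀ y, ((z y + c : ℝ) : EReal) ≤ f y) (x : E) (x' : StrongDual ℝ E) :
    ∃ C : ℝ, ∀ y, ((‖y - x‖ + C : ℝ) : EReal) ≤ f y + ((2⁻¹ * ‖y - x‖ ^ 2 - x' y : ℝ) : EReal) := by
  set K := ‖z - x'‖
  refine ⟨c + (z - x') x - (K + 1) ^ 2 / 2, fun y => ?_⟩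
  have hK := abs_le.1 (Real.norm_eq_abs _ ▸ (z - x').le_opNorm (y - x))
  simp only [map_sub, _root_.sub_apply] at hK
  calc ((‖y - x‖ + (c + (z - x') x - (K + 1) ^ 2 / 2) : ℝ) : EReal)
      ≤ ((z y + c + (2⁻¹ * ‖y - x‖ ^ 2 - x' y)) : ℝ) := by
        rw [EReal.coe_le_coe_iff, _root_.sub_apply]
        nlinarith [sq_nonneg (‖y - x‖ - K - 1)]
    _ ≤ f y + ((2⁻¹ * ‖y - x‖ ^ 2 - x' y : ℝ) : EReal) := by
        rw [EReal.coe_add]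
        gcongr
        exact hzc y

theorem ERealProper.exists_mem_subdiffGraph_forall_half_sq_le [CompleteSpace E]
    (hf : ERealProper f) (hconv : ERealConvexOn f) (hlsc : LowerSemicontinuous f) (x : E)
    (x' : StrongDual ℝ E) :
    ∃ R : ℝ, ∀ α > 0, ∃ p ∈ subdiffGraph f, ‖p.1 - x‖ ≤ R ∧
      ∀ v, 2⁻¹ * ‖p.1 - x‖ ^ 2 + (x' - p.2) v - α * ‖v‖ ≤ 2⁻¹ * ‖p.1 - x + v‖ ^ 2 := by
  obtain ⟨z, c, hzc⟩ := exists_affine_minorant hf hconv hlsc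
  obtain ⟨C, hC⟩ := exists_norm_sub_add_le_add_half_sq hzc x x'
  set k : E → ℝ := fun y => 2⁻¹ * ‖y - x‖ ^ 2 - x' y
  have hkc : Continuous k := by fun_prop
  have hd : ∀ z : E, ConvexOn ℝ Set.univ fun y => ‖y - z‖ := fun z => by
    simpa only [dist_eq_norm] using convexOn_univ_dist z
  obtain ⟨x₀, hx₀⟩ := hf.2
  lift f x₀ to ℝ using ⟨hx₀, hf.1 x₀⟩ with v₀ hv₀
  refine ⟨v₀ + k x₀ - C, fun α hα => ?_⟩
  obtain ⟨s, hs₀, hs⟩ := (hlsc.add_coe hkc).exists_le_forall_le_add_dist (m := C)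
    (fun y => (EReal.coe_le_coe_iff.2 (by linarith [norm_nonneg (y - x)])).trans (hC y))
    (x₀ := x₀) (by rw [← hv₀, ← EReal.coe_add]; exact EReal.coe_ne_top _) hα
  rw [← hv₀, ← EReal.coe_add] at hs₀
  have hsR : ‖s - x‖ ≤ v₀ + k x₀ - C := by
    have := EReal.coe_le_coe_iff.1 ((hC s).trans hs₀)
    linarith
  have hfs : f s ≠ ⊤ := fun h => by
    rw [h, EReal.top_add_of_ne_bot (EReal.coe_ne_bot _)] at hs₀
    exact EReal.coe_ne_top _ (top_le_iff.1 hs₀)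
  lift f s to ℝ using ⟨hfs, hf.1 s⟩ with a ha
  have hkα : ConvexOn ℝ Set.univ fun y => k y + α * ‖y - s‖ :=
    ((((hd x).pow (fun _ _ => norm_nonneg _) 2).smul (by norm_num : (0 : ℝ) ≤ 2⁻¹)).sub
      (x'.toLinearMap.concaveOn convex_univ)).add ((hd s).smul hα.le)
  obtain ⟨t, ht, htk⟩ := exists_subgradient_of_forall_le_add hconv hkα (by fun_prop) ha.symm
    fun y => by
      simpa only [sub_self, norm_zero, mul_zero, add_zero, EReal.coe_add, dist_eq_norm,
        add_assoc] using hs y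
  refine ⟨(s, t), (hf.mem_subdiffGraph_iff _).2 ⟨a, ha.symm, ht⟩, hsR, fun v => ?_⟩
  have := htk (s + v)
  simp only [k, add_sub_cancel_left, sub_self, norm_zero, mul_zero, add_zero, map_add,
    _root_.sub_apply, show s + v - x = s - x + v by abel] at this ⊢
  linarith

theorem ERealProper.isQuasidense_subdiffGraph [CompleteSpace E] (hf : ERealProper f)
    (hconv : ERealConvexOn f) (hlsc : LowerSemicontinuous f) : IsQuasidense (subdiffGraph f) := by
  intro x x' ε hε
  obtain ⟨R, hR⟩ := hf.exists_mem_subdiffGraph_forall_half_sq_le hconv hlsc x x'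
  set α := min 1 (ε / (2 * |R| + 2))
  have hα : 0 < α := lt_min one_pos (by positivity)
  have hαε : α * (2 * |R| + 2) ≤ ε :=
    (le_div_iff₀ (by positivity)).1 (min_le_right _ _)
  obtain ⟨p, hp, hpR, hpv⟩ := hR α hα
  refine ⟨p, hp, ?_⟩
  have hQ := half_sq_add_half_opNorm_sq_sub_le hα.le hpv
  rw [norm_sub_rev p.2, show (p.2 - x') (p.1 - x) = -((x' - p.2) (p.1 - x)) by
    simp only [_root_.sub_apply]; ring]
  have : α ^ 2 ≤ α := by nlinarith [min_le_left 1 (ε / (2 * |R| + 2))]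
  nlinarith [le_abs_self R, mul_le_mul_of_nonneg_left hpR hα.le]

end Quasidense

theorem subdiff_closed_monotone_quasidense_general
    {E : Type*} [NormedAddCommGroup E] [NormedSpace ℝ E] [CompleteSpace E]
    (f : E → EReal) (hproper : ERealProper f) (hconv : ERealConvexOn f)
    (hlsc : LowerSemicontinuous f) :
    IsClosed (subdiffGraph f) ∧ IsMonotoneGraph (subdiffGraph f) ∧
      IsQuasidense (subdiffGraph f) :=
  ⟨hproper.isClosed_subdiffGraph hlsc, hproper.isMonotoneGraph_subdiffGraph,
    hproper.isQuasidense_subdiffGraph hconv hlsc⟩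

/-- The subdifferential of a proper convex lower semicontinuous function on a
nonzero real Banach space is closed, monotone and quasidense. -/
theorem subdiff_closed_monotone_quasidense
    {E : Type*} [NormedAddCommGroup E] [NormedSpace ℝ E] [CompleteSpace E] [Nontrivial E]
    (f : E → EReal) (hproper : ERealProper f) (hconv : ERealConvexOn f)
    (hlsc : LowerSemicontinuous f) :
    IsClosed (subdiffGraph f) ∧ IsMonotoneGraph (subdiffGraph f) ∧
      IsQuasidense (subdiffGraph f) :=
  subdiff_closed_monotone_quasidense_general f hproper hconv hlsc
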